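/- arXiv:1402.1719 — 7 statements merged into one kernel-verified Lean document; each statement's English description precedes it below -/
import Mathlib

section
/- The set Ω = {(M_S, M_I, A, H, I) ∈ ℝ⁵₊ : M_S + M_I ≤ 1, A ≤ 1, H + I ≤ 1} is positively invariant for the system: if a solution starts in Ω, it remains in Ω for all t ≥ 0. -/
/-!
In the coordinates `(M_S, M_I, 1 - M_S - M_I, A, 1 - A, H, I, 1 - H - I)` the region Ω is the
nonnegative orthant, and the system becomes `y' = f y` with `f` quasi-positive (`f_i y ≥ 0` whenever
`y ≥ 0` and `y_i = 0`) and locally Lipschitz near the orthant. If `y_i ≤ 0` then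
`-f_i y ≤ f_i y⁺ - f_i y ≤ K ‖y⁻‖`, so the total negative part `F = ∑ i, (y_i)⁻` has right
derivative at most `C * F` near any time at which it vanishes. Gronwall's inequality keeps `F`
at zero there, and a continuity argument propagates `F = 0` to all `t ≥ 0`.
-/

open Set Filter Topology
open scoped NNReal

lemma hasDerivWithinAt_Ici_negPart_of_eq_zero {g : ℝ → ℝ} {g' t : ℝ} (hg : HasDerivAt g g' t)
    (ht : g t = 0) : HasDerivWithinAt (fun s => (g s)⁻) g'⁻ (Ici t) t := by
  have hslope : Tendsto (slope g t) (𝓝[>] t) (𝓝 g') :=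
    (hasDerivWithinAt_iff_tendsto_slope' (lt_irrefl t)).1 hg.hasDerivWithinAt
  refine ((hasDerivWithinAt_iff_tendsto_slope' (lt_irrefl t)).2 ?_).Ici_of_Ioi
  refine ((continuous_negPart.tendsto g').comp hslope).congr' ?_
  filter_upwards [self_mem_nhdsWithin] with s (hs : t < s)
  have hst : 0 ≤ s - t := (sub_pos.2 hs).le
  simp only [Function.comp_apply, slope_def_field, ht, negPart_def, neg_zero, max_self, sub_zero,
    ← neg_div, ← max_div_div_right hst, zero_div]

lemma exists_hasDerivWithinAt_Ici_negPart_le {g : ℝ → ℝ} {g' t c : ℝ} (hg : HasDerivAt g g' t)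
    (hc : 0 ≤ c) (hbound : g t ≤ 0 → -g' ≤ c) :
    ∃ L ≤ c, HasDerivWithinAt (fun s => (g s)⁻) L (Ici t) t := by
  rcases lt_trichotomy (g t) 0 with hneg | hzero | hpos
  · refine ⟨-g', hbound hneg.le, HasDerivAt.hasDerivWithinAt ?_⟩
    refine hg.neg.congr_of_eventuallyEq ?_
    filter_upwards [hg.continuousAt.eventually_lt_const hneg] with s hs
    exact negPart_eq_neg.2 hs.le
  · exact ⟨g'⁻, max_le (hbound hzero.le) hc, hasDerivWithinAt_Ici_negPart_of_eq_zero hg hzero⟩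
  · refine ⟨0, hc, HasDerivAt.hasDerivWithinAt ?_⟩
    refine (hasDerivAt_const t (0 : ℝ)).congr_of_eventuallyEq ?_
    filter_upwards [hg.continuousAt.eventually_const_lt hpos] with s hs
    exact negPart_eq_zero.2 hs.le

lemma eq_zero_of_hasDerivWithinAt_Ici_le_mul_self {F : ℝ → ℝ} {a : ℝ}
    (hF : ContinuousOn F (Ici a)) (hnonneg : ∀ t ≥ a, 0 ≤ F t) (ha : F a = 0)
    (hloc : ∀ x ≥ a, F x = 0 →
      ∃ K, ∀ᶠ t in 𝓝[≥] x, ∃ L ≤ K * F t, HasDerivWithinAt F L (Ici t) t) :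
    ∀ t ≥ a, F t = 0 := by
  intro T hT
  suffices Icc a T ⊆ {t | F t = 0} from this ⟨hT, le_rfl⟩
  refine IsClosed.Icc_subset_of_forall_exists_gt ?_ ha ?_
  · rw [inter_comm]
    exact (hF.mono Icc_subset_Ici_self).preimage_isClosed_of_isClosed isClosed_Icc
      isClosed_singleton
  rintro x ⟨hFx, hax, -⟩ y hxy
  obtain ⟨K, hK⟩ := hloc x hax hFx
  obtain ⟨b, hxb, hb⟩ := mem_nhdsGE_iff_exists_Ico_subset.1 hK
  have hxz : x < min y b := lt_min hxy hxb
  have hslope : ∀ t ∈ Ico x (min y b), ∀ r, K * F t < r →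
      ∃ᶠ z in 𝓝[>] t, (z - t)⁻¹ * (F z - F t) < r := by
    intro t ht r hr
    obtain ⟨L, hLK, hL⟩ := hb ⟨ht.1, ht.2.trans_le (min_le_right y b)⟩
    exact hL.liminf_right_slope_le (hLK.trans_lt hr)
  have hgronwall := le_gronwallBound_of_liminf_deriv_right_le
    (hF.mono fun t ht => hax.trans ht.1) hslope hFx.le (fun t _ => (add_zero _).ge)
    (min y b) ⟨hxz.le, le_rfl⟩
  rw [gronwallBound_ε0_δ0] at hgronwall
  exact ⟨min y b, le_antisymm hgronwall (hnonneg _ (hax.trans hxz.le)), hxz, min_le_left y b⟩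

def QuasiPositive {ι : Type*} (f : (ι → ℝ) → ι → ℝ) : Prop :=
  ∀ z, 0 ≤ z → ∀ i, z i = 0 → 0 ≤ f z i

lemma QuasiPositive.neg_apply_le_mul_sum_negPart {ι : Type*} [Fintype ι]
    {f : (ι → ℝ) → ι → ℝ} (hf : QuasiPositive f) {K : ℝ≥0} {U : Set (ι → ℝ)}
    (hK : LipschitzOnWith K f U) {v : ι → ℝ} (hv : v ∈ U) (hv' : v⁺ ∈ U) {i : ι}
    (hi : v i ≤ 0) : -f v i ≤ K * ∑ j, (v j)⁻ := by
  have hvi : 0 ≤ f v⁺ i := hf _ (posPart_nonneg v) i (by simpa using hi)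
  calc -f v i ≤ f v⁺ i - f v i := by linarith
    _ ≤ ‖f v⁺ - f v‖ := (le_abs_self _).trans (norm_le_pi_norm (f v⁺ - f v) i)
    _ ≤ K * ‖v⁺ - v‖ := hK.norm_sub_le hv' hv
    _ = K * ‖v⁻‖ := by nth_rewrite 2 [← posPart_sub_negPart v]; rw [sub_sub_cancel]
    _ ≤ K * ∑ j, (v j)⁻ := by
      gcongr
      refine (pi_norm_le_iff_of_nonneg
        (Finset.sum_nonneg fun j _ => negPart_nonneg _)).2 fun j => ?_
      rw [Pi.negPart_apply, Real.norm_of_nonneg (negPart_nonneg _)]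
      exact Finset.single_le_sum (f := fun j => (v j)⁻) (fun j _ => negPart_nonneg _)
        (Finset.mem_univ j)

theorem QuasiPositive.nonneg_of_hasDerivAt {ι : Type*} [Fintype ι] {f : (ι → ℝ) → ι → ℝ}
    (hf : QuasiPositive f) (hlip : ∀ z, 0 ≤ z → ∃ K, ∃ U ∈ 𝓝 z, LipschitzOnWith K f U)
    {y : ℝ → ι → ℝ} {a : ℝ} (hy : ∀ t ≥ a, HasDerivAt y (f (y t)) t) (ha : 0 ≤ y a) :
    ∀ t ≥ a, 0 ≤ y t := by
  set F : ℝ → ℝ := fun t => ∑ i, (y t i)⁻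
  have hF_nonneg (t : ℝ) : 0 ≤ F t := Finset.sum_nonneg fun i _ => negPart_nonneg _
  have hF_eq_zero (t : ℝ) : F t = 0 ↔ 0 ≤ y t := by
    simp [F, Finset.sum_eq_zero_iff_of_nonneg, negPart_eq_zero, Pi.le_def]
  have hsum_cont : Continuous fun v : ι → ℝ => ∑ i, (v i)⁻ :=
    continuous_finsetSum _ fun i _ => continuous_negPart.comp (continuous_apply i)
  have hF_cont : ContinuousOn F (Ici a) := fun t ht =>
    (hsum_cont.continuousAt.comp (hy t ht).continuousAt).continuousWithinAt
  refine fun t ht => (hF_eq_zero t).1 (eq_zero_of_hasDerivWithinAt_Ici_le_mul_self hF_cont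
    (fun t _ => hF_nonneg t) ((hF_eq_zero a).2 ha) (fun x hx hFx => ?_) t ht)
  obtain ⟨K, U, hU, hK⟩ := hlip _ ((hF_eq_zero x).1 hFx)
  have hyx : Tendsto y (𝓝 x) (𝓝 (y x)) := (hy x hx).continuousAt
  have hyx_pos : Tendsto (fun t => (y t)⁺) (𝓝 x) (𝓝 (y x)) := by
    have h : Tendsto (fun t => (y t)⁺) (𝓝 x) (𝓝 (y x)⁺) :=
      tendsto_pi_nhds.2 fun i => (continuous_posPart.tendsto _).comp (tendsto_pi_nhds.1 hyx i)
    rwa [posPart_eq_self.2 ((hF_eq_zero x).1 hFx)] at h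
  refine ⟨Fintype.card ι * K, ?_⟩
  filter_upwards [self_mem_nhdsWithin, nhdsWithin_le_nhds (hyx hU),
    nhdsWithin_le_nhds (hyx_pos hU)] with t (hxt : x ≤ t) hyt hyt_pos
  choose L hLK hL using fun i => exists_hasDerivWithinAt_Ici_negPart_le
    (hasDerivAt_pi.1 (hy t (hx.trans hxt)) i) (by positivity : 0 ≤ K * F t)
    (hf.neg_apply_le_mul_sum_negPart hK hyt hyt_pos)
  refine ⟨∑ i, L i, ?_, HasDerivWithinAt.fun_sum fun i _ => hL i⟩
  calc ∑ i, L i ≤ ∑ _i : ι, K * F t := Finset.sum_le_sum fun i _ => hLK i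
    _ = Fintype.card ι * K * F t := by simp [Finset.sum_const, Finset.card_univ, mul_assoc]

/-- The coordinates in which Ω is the nonnegative orthant. -/
def omegaCoords (ms mi a h i : ℝ) : Fin 8 → ℝ :=
  ![ms, mi, 1 - ms - mi, a, 1 - a, h, i, 1 - h - i]

/-- The system in the coordinates `omegaCoords`, i.e. `z = (M_S, M_I, U, A, B, H, I, R)` with
`U = 1 - M_S - M_I`, `B = 1 - A`, `R = 1 - H - I`. The terms are arranged (e.g. `1 - H` as `R + I`)
so that the field is quasi-positive on the whole orthant, not only on the image of `omegaCoords`. -/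
noncomputable def mosquitoField (γ k μ1 μ2 μH β1 β2 σ α1 α2 : ℝ) (z : Fin 8 → ℝ) : Fin 8 → ℝ :=
  ![γ / k * z 3 * z 2 - μ1 * z 0 - β1 * (z 6 / (1 + α1 * z 6)) * z 0,
    β1 * (z 6 / (1 + α1 * z 6)) * z 0 - μ1 * z 1,
    μ1 * (z 0 + z 1) - γ / k * z 3 * z 2,
    k * z 4 * (z 0 + z 1) - (μ2 + γ) * z 3,
    (μ2 + γ) * z 3 - k * z 4 * (z 0 + z 1),
    μH * (z 7 + z 6) - β2 * (z 1 / (1 + α2 * z 1)) * z 5,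
    β2 * (z 1 / (1 + α2 * z 1)) * z 5 - (σ + μH) * z 6,
    σ * z 6 - μH * z 7]

lemma nonneg_omegaCoords_iff {ms mi a h i : ℝ} :
    0 ≤ omegaCoords ms mi a h i ↔
      0 ≤ ms ∧ 0 ≤ mi ∧ 0 ≤ a ∧ 0 ≤ h ∧ 0 ≤ i ∧ ms + mi ≤ 1 ∧ a ≤ 1 ∧ h + i ≤ 1 := by
  constructor
  · intro hz
    have hU : 0 ≤ 1 - ms - mi := hz 2
    have hB : 0 ≤ 1 - a := hz 4
    have hR : 0 ≤ 1 - h - i := hz 7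
    exact ⟨hz 0, hz 1, hz 3, hz 5, hz 6, by linarith, by linarith, by linarith⟩
  · rintro ⟨hms, hmi, ha, hh, hi, hU, hB, hR⟩ j
    fin_cases j <;> simp [omegaCoords] <;> linarith

section
variable {γ k μ1 μ2 μH β1 β2 σ α1 α2 : ℝ}

lemma quasiPositive_mosquitoField (hγ : 0 ≤ γ) (hk : 0 ≤ k) (hμ1 : 0 ≤ μ1) (hμ2 : 0 ≤ μ2)
    (hμH : 0 ≤ μH) (hβ1 : 0 ≤ β1) (hβ2 : 0 ≤ β2) (hσ : 0 ≤ σ) (hα1 : 0 ≤ α1) (hα2 : 0 ≤ α2) :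
    QuasiPositive (mosquitoField γ k μ1 μ2 μH β1 β2 σ α1 α2) := by
  intro z hz i hzi
  have hz' : ∀ j, 0 ≤ z j := hz
  have := hz' 0; have := hz' 1; have := hz' 2; have := hz' 3
  have := hz' 4; have := hz' 5; have := hz' 6; have := hz' 7
  fin_cases i <;> simp only [Fin.zero_eta, Fin.mk_one, Fin.reduceFinMk] at hzi <;>
    simp [mosquitoField, hzi] <;> positivity

lemma contDiffAt_mosquitoField (hα1 : 0 ≤ α1) (hα2 : 0 ≤ α2) {z : Fin 8 → ℝ} (hz : 0 ≤ z) :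
    ContDiffAt ℝ 1 (mosquitoField γ k μ1 μ2 μH β1 β2 σ α1 α2) z := by
  have hz' : ∀ j, 0 ≤ z j := hz
  have := hz' 1; have := hz' 6
  rw [contDiffAt_pi]
  intro i
  fin_cases i <;> simp [mosquitoField] <;> fun_prop (disch := positivity)

lemma hasDerivAt_omegaCoords {MS MI A H I : ℝ → ℝ} {t : ℝ}
    (hMS : HasDerivAt MS (γ / k * A t * (1 - MS t - MI t) - μ1 * MS t
      - β1 * (I t / (1 + α1 * I t)) * MS t) t)
    (hMI : HasDerivAt MI (β1 * (I t / (1 + α1 * I t)) * MS t - μ1 * MI t) t)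
    (hA : HasDerivAt A (k * (1 - A t) * (MS t + MI t) - μ2 * A t - γ * A t) t)
    (hH : HasDerivAt H (μH - μH * H t - β2 * (MI t / (1 + α2 * MI t)) * H t) t)
    (hI : HasDerivAt I (β2 * (MI t / (1 + α2 * MI t)) * H t - (σ + μH) * I t) t) :
    HasDerivAt (fun s => omegaCoords (MS s) (MI s) (A s) (H s) (I s))
      (mosquitoField γ k μ1 μ2 μH β1 β2 σ α1 α2
        (omegaCoords (MS t) (MI t) (A t) (H t) (I t))) t := by
  refine hasDerivAt_pi.2 fun j => ?_
  fin_cases j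
  · exact hMS.congr_deriv (by simp [mosquitoField, omegaCoords])
  · exact hMI.congr_deriv (by simp [mosquitoField, omegaCoords])
  · exact (((hasDerivAt_const t 1).sub hMS).sub hMI).congr_deriv
      (by simp [mosquitoField, omegaCoords]; ring)
  · exact hA.congr_deriv (by simp [mosquitoField, omegaCoords]; ring)
  · exact ((hasDerivAt_const t 1).sub hA).congr_deriv (by simp [mosquitoField, omegaCoords]; ring)
  · exact hH.congr_deriv (by simp [mosquitoField, omegaCoords]; ring)
  · exact hI.congr_deriv (by simp [mosquitoField, omegaCoords])
  · exact (((hasDerivAt_const t 1).sub hH).sub hI).congr_deriv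
      (by simp [mosquitoField, omegaCoords]; ring)

end

/-- Positive invariance of the region Ω for the mosquito-borne epidemic model. -/
theorem omega_positively_invariant
    (γ k μ1 μ2 μH β1 β2 σ α1 α2 : ℝ)
    (hγ : 0 < γ) (hk : 0 < k) (hμ1 : 0 < μ1) (hμ2 : 0 < μ2) (hμH : 0 < μH)
    (hβ1 : 0 < β1) (hβ2 : 0 < β2) (hσ : 0 < σ) (hα1 : 0 ≤ α1) (hα2 : 0 ≤ α2)
    (MS MI A H I : ℝ → ℝ)
    (hMS : ∀ t, 0 ≤ t → HasDerivAt MS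
      (γ / k * A t * (1 - MS t - MI t) - μ1 * MS t
        - β1 * (I t / (1 + α1 * I t)) * MS t) t)
    (hMI : ∀ t, 0 ≤ t → HasDerivAt MI
      (β1 * (I t / (1 + α1 * I t)) * MS t - μ1 * MI t) t)
    (hA : ∀ t, 0 ≤ t → HasDerivAt A
      (k * (1 - A t) * (MS t + MI t) - μ2 * A t - γ * A t) t)
    (hH : ∀ t, 0 ≤ t → HasDerivAt H
      (μH - μH * H t - β2 * (MI t / (1 + α2 * MI t)) * H t) t)
    (hI : ∀ t, 0 ≤ t → HasDerivAt I
      (β2 * (MI t / (1 + α2 * MI t)) * H t - (σ + μH) * I t) t)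
    (h0 : 0 ≤ MS 0 ∧ 0 ≤ MI 0 ∧ 0 ≤ A 0 ∧ 0 ≤ H 0 ∧ 0 ≤ I 0 ∧
          MS 0 + MI 0 ≤ 1 ∧ A 0 ≤ 1 ∧ H 0 + I 0 ≤ 1) :
    ∀ t, 0 ≤ t →
      0 ≤ MS t ∧ 0 ≤ MI t ∧ 0 ≤ A t ∧ 0 ≤ H t ∧ 0 ≤ I t ∧
      MS t + MI t ≤ 1 ∧ A t ≤ 1 ∧ H t + I t ≤ 1 := by
  have hquasi := quasiPositive_mosquitoField hγ.le hk.le hμ1.le hμ2.le hμH.le hβ1.le hβ2.le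
    hσ.le hα1 hα2
  have hlip (z : Fin 8 → ℝ) (hz : 0 ≤ z) :
      ∃ K, ∃ U ∈ 𝓝 z, LipschitzOnWith K (mosquitoField γ k μ1 μ2 μH β1 β2 σ α1 α2) U :=
    (contDiffAt_mosquitoField hα1 hα2 hz).exists_lipschitzOnWith
  intro t ht
  exact nonneg_omegaCoords_iff.1 <| hquasi.nonneg_of_hasDerivAt hlip
    (fun s hs => hasDerivAt_omegaCoords (hMS s hs) (hMI s hs) (hA s hs) (hH s hs) (hI s hs))
    (nonneg_omegaCoords_iff.2 h0) t ht
end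

section
/- Let Q₀ = γ/(μ₁(γ+μ₂)), m* = γ(1 - Q₀⁻¹)/(γ + kμ₁), a* = k(1 - Q₀⁻¹)/(k + μ₂ + γ). Then E₁ = (m*, 0, a*, 1, 0) is an equilibrium of the system, i.e., all five right-hand sides vanish at E₁. -/
/-!
At a disease-free state (`M_I = I = 0`, `H = 1`) the infection terms vanish, so only the
mosquito/aquatic subsystem `(M_S, A)` has to be balanced. Writing `q = 1 - Q₀⁻¹`, the
definition of `Q₀` gives `γ (1 - q) = μ₁ (γ + μ₂)`, and this single relation is exactly
what makes both equations of that subsystem vanish at `(m*, a*)`.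
-/

lemma mul_inv_basicOffspring {γ μ1 μ2 : ℝ} (hγ : γ ≠ 0) :
    γ * (γ / (μ1 * (γ + μ2)))⁻¹ = μ1 * (γ + μ2) := by
  rw [inv_div, mul_div_cancel₀ _ hγ]

section AquaticSubsystem

variable {γ k μ1 μ2 q : ℝ}

lemma aquatic_equilibrium_adult_eq
    (hk : k ≠ 0) (hm : γ + k * μ1 ≠ 0) (ha : k + μ2 + γ ≠ 0)
    (hq : γ * (1 - q) = μ1 * (γ + μ2)) :
    γ / k * (k * q / (k + μ2 + γ)) * (1 - γ * q / (γ + k * μ1))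
      - μ1 * (γ * q / (γ + k * μ1)) = 0 := by
  field_simp
  linear_combination (γ * q) * hq

lemma aquatic_equilibrium_aquatic_eq
    (hm : γ + k * μ1 ≠ 0) (ha : k + μ2 + γ ≠ 0)
    (hq : γ * (1 - q) = μ1 * (γ + μ2)) :
    k * (1 - k * q / (k + μ2 + γ)) * (γ * q / (γ + k * μ1))
      - μ2 * (k * q / (k + μ2 + γ)) - γ * (k * q / (k + μ2 + γ)) = 0 := by
  field_simp
  linear_combination (k ^ 2 * q) * hq

end AquaticSubsystem

theorem E1_is_equilibrium_general
    (γ k μ1 μ2 μH β1 β2 σ α1 α2 : ℝ)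
    (hγ : 0 < γ) (hk : 0 < k) (hμ1 : 0 < μ1) (hμ2 : 0 < μ2)
    (Q0 mstar astar MS MI A H I : ℝ)
    (hQ0 : Q0 = γ / (μ1 * (γ + μ2)))
    (hm : mstar = γ * (1 - Q0⁻¹) / (γ + k * μ1))
    (ha : astar = k * (1 - Q0⁻¹) / (k + μ2 + γ))
    (hE : MS = mstar ∧ MI = 0 ∧ A = astar ∧ H = 1 ∧ I = 0) :
    γ / k * A * (1 - MS - MI) - μ1 * MS - β1 * (I / (1 + α1 * I)) * MS = 0 ∧
    β1 * (I / (1 + α1 * I)) * MS - μ1 * MI = 0 ∧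
    k * (1 - A) * (MS + MI) - μ2 * A - γ * A = 0 ∧
    μH - μH * H - β2 * (MI / (1 + α2 * MI)) * H = 0 ∧
    β2 * (MI / (1 + α2 * MI)) * H - (σ + μH) * I = 0 := by
  obtain ⟨rfl, rfl, rfl, rfl, rfl⟩ := hE
  have hq : γ * (1 - (1 - Q0⁻¹)) = μ1 * (γ + μ2) := by
    rw [sub_sub_cancel, hQ0, mul_inv_basicOffspring hγ.ne']
  have hmden : γ + k * μ1 ≠ 0 := by positivity
  have haden : k + μ2 + γ ≠ 0 := by positivity
  have hadult := aquatic_equilibrium_adult_eq hk.ne' hmden haden hq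
  have haquatic := aquatic_equilibrium_aquatic_eq hmden haden hq
  subst hm ha
  refine ⟨?_, by simp, ?_, by simp, by simp⟩
  · simpa [mul_div_assoc] using hadult
  · simpa [mul_div_assoc] using haquatic

/-- E₁ = (m*, 0, a*, 1, 0) is an equilibrium of the system. -/
theorem E1_is_equilibrium
    (γ k μ1 μ2 μH β1 β2 σ α1 α2 : ℝ)
    (hγ : 0 < γ) (hk : 0 < k) (hμ1 : 0 < μ1) (hμ2 : 0 < μ2) (hμH : 0 < μH)
    (hβ1 : 0 < β1) (hβ2 : 0 < β2) (hσ : 0 < σ) (hα1 : 0 ≤ α1) (hα2 : 0 ≤ α2)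
    (Q0 mstar astar MS MI A H I : ℝ)
    (hQ0 : Q0 = γ / (μ1 * (γ + μ2))) (hQ0gt : 1 < Q0)
    (hm : mstar = γ * (1 - Q0⁻¹) / (γ + k * μ1))
    (ha : astar = k * (1 - Q0⁻¹) / (k + μ2 + γ))
    (hE : MS = mstar ∧ MI = 0 ∧ A = astar ∧ H = 1 ∧ I = 0) :
    γ / k * A * (1 - MS - MI) - μ1 * MS - β1 * (I / (1 + α1 * I)) * MS = 0 ∧
    β1 * (I / (1 + α1 * I)) * MS - μ1 * MI = 0 ∧
    k * (1 - A) * (MS + MI) - μ2 * A - γ * A = 0 ∧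
    μH - μH * H - β2 * (MI / (1 + α2 * MI)) * H = 0 ∧
    β2 * (MI / (1 + α2 * MI)) * H - (σ + μH) * I = 0 :=
  E1_is_equilibrium_general γ k μ1 μ2 μH β1 β2 σ α1 α2 hγ hk hμ1 hμ2 Q0 mstar astar MS MI A H I hQ0
    hm ha hE
end

section
/- If Q₀ < 1, where Q₀ = γ/(μ₁(γ+μ₂)), then the trivial equilibrium E₀ = (0,0,0,1,0) is linearly asymptotically stable: every eigenvalue of the Jacobian matrix of the system at E₀ has negative real part. -/
/-!
At E₀ the infected compartment `M_I` decouples: its row of the Jacobian is `-μ₁ e₂`. An eigenvector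
with `Re λ ≥ 0` therefore has vanishing `M_I`-component, and then also vanishing `H`- and
`I`-components, since those rows are `-μ_H` and `-(σ + μ_H)` on the diagonal plus multiples of
`M_I`. What remains is an eigenvector of the `(M_S, A)` block `[[-μ₁, γ/k], [k, -(μ₂ + γ)]]`, whose
trace is negative and whose determinant `μ₁(μ₂ + γ) - γ` is positive exactly when `Q₀ < 1`; by
Routh–Hurwitz its eigenvalues lie in the open left half-plane.
-/

open Matrix

theorem Matrix.exists_mulVec_eq_smul_of_mem_spectrum {K n : Type*} [Field K] [Fintype n]
    [DecidableEq n] {A : Matrix n n K} {lam : K} (h : lam ∈ spectrum K A) :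
    ∃ v ≠ 0, A *ᵥ v = lam • v := by
  rw [← spectrum_toLin', ← Module.End.hasEigenvalue_iff_mem_spectrum] at h
  obtain ⟨v, hv, hv0⟩ := h.exists_hasEigenvector
  exact ⟨v, hv0, by simpa using Module.End.mem_eigenspace_iff.mp hv⟩

namespace Complex

theorem re_neg_of_sq_add_mul_add_eq_zero {b c : ℝ} (hb : 0 < b) (hc : 0 < c) {z : ℂ}
    (h : z ^ 2 + b * z + c = 0) : z.re < 0 := by
  have hre := congrArg re h
  have him := congrArg im h
  simp only [pow_two, add_re, add_im, mul_re, mul_im, ofReal_re, ofReal_im, zero_re,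
    zero_im] at hre him
  have him' : z.im * (2 * z.re + b) = 0 := by linear_combination him
  by_contra! hz
  have hz_im : z.im = 0 := (mul_eq_zero.mp him').resolve_right (by linarith)
  nlinarith

theorem eq_zero_of_add_mul_eq_zero {c : ℝ} (hc : 0 < c) {z w : ℂ} (hz : 0 ≤ z.re)
    (h : (z + c) * w = 0) : w = 0 := by
  refine (mul_eq_zero.mp h).resolve_left fun h0 => ?_
  have := congrArg re h0
  simp only [add_re, ofReal_re, zero_re] at this
  linarith

theorem re_neg_of_eigenvector_two_by_two {a b c d : ℝ} (htr : a + d < 0) (hdet : b * c < a * d)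
    {z x y : ℂ} (hxy : x ≠ 0 ∨ y ≠ 0) (hx : a * x + b * y = z * x) (hy : c * x + d * y = z * y) :
    z.re < 0 := by
  have hchar : z ^ 2 + ↑(-(a + d)) * z + ↑(a * d - b * c) = 0 := by
    rcases hxy with hx0 | hy0
    · refine (mul_eq_zero.mp ?_).resolve_right hx0
      push_cast
      linear_combination (↑d - z) * hx - ↑b * hy
    · refine (mul_eq_zero.mp ?_).resolve_right hy0
      push_cast
      linear_combination (↑a - z) * hy - ↑c * hx
  exact re_neg_of_sq_add_mul_add_eq_zero (by linarith) (by linarith) hchar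

end Complex

theorem E0_linearly_stable_general
    (γ k μ1 μ2 μH β2 σ : ℝ)
    (hγ : 0 < γ) (hk : 0 < k) (hμ1 : 0 < μ1) (hμ2 : 0 < μ2) (hμH : 0 < μH)
    (hσ : 0 < σ)
    (hQ0 : γ / (μ1 * (γ + μ2)) < 1)
    (J : Matrix (Fin 5) (Fin 5) ℝ)
    (hJ : J = !![-μ1, 0, γ / k, 0, 0;
                 0, -μ1, 0, 0, 0;
                 k, k, -(μ2 + γ), 0, 0;
                 0, -β2, 0, -μH, 0;
                 0, β2, 0, 0, -(σ + μH)]) :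
    ∀ lam : ℂ, lam ∈ spectrum ℂ (J.map (Complex.ofReal)) → lam.re < 0 := by
  intro lam hlam
  obtain ⟨v, hv0, hv⟩ := exists_mulVec_eq_smul_of_mem_spectrum hlam
  have e : ∀ i, (J.map Complex.ofReal *ᵥ v) i = lam * v i := fun i => by simp [hv]
  subst hJ
  have e0 := e 0; have e1 := e 1; have e2 := e 2; have e3 := e 3; have e4 := e 4
  simp only [mulVec, dotProduct, neg_add_rev, Fin.isValue, map_apply, of_apply, cons_val',
    cons_val_fin_one, cons_val_zero, Fin.sum_univ_five, Complex.ofReal_neg, neg_mul, cons_val_one,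
    Complex.ofReal_zero, zero_mul, add_zero, cons_val, Complex.ofReal_div, zero_add,
    Complex.ofReal_add] at e0 e1 e2 e3 e4
  by_contra! hre
  have hv1 : v 1 = 0 := Complex.eq_zero_of_add_mul_eq_zero hμ1 hre (by linear_combination -e1)
  have hv3 : v 3 = 0 :=
    Complex.eq_zero_of_add_mul_eq_zero hμH hre (by linear_combination -e3 - (β2 : ℂ) * hv1)
  have hv4 : v 4 = 0 := Complex.eq_zero_of_add_mul_eq_zero (add_pos hσ hμH) hre
    (by push_cast; linear_combination -e4 + (β2 : ℂ) * hv1)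
  have hv02 : v 0 ≠ 0 ∨ v 2 ≠ 0 := by
    by_contra! h
    exact hv0 (funext fun i => by fin_cases i <;> simp [h, hv1, hv3, hv4])
  have hdet : γ / k * k < -μ1 * -(μ2 + γ) := by
    rw [div_lt_one (by positivity)] at hQ0
    rw [div_mul_cancel₀ _ hk.ne']
    linarith
  refine (Complex.re_neg_of_eigenvector_two_by_two (by linarith) hdet hv02 ?_ ?_).not_ge hre
  · push_cast; linear_combination e0
  · push_cast; linear_combination e2 - (k : ℂ) * hv1

/-- If Q₀ < 1 then every eigenvalue of the Jacobian at E₀ = (0,0,0,1,0)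
has negative real part. -/
theorem E0_linearly_stable
    (γ k μ1 μ2 μH β1 β2 σ α1 α2 : ℝ)
    (hγ : 0 < γ) (hk : 0 < k) (hμ1 : 0 < μ1) (hμ2 : 0 < μ2) (hμH : 0 < μH)
    (hβ1 : 0 < β1) (hβ2 : 0 < β2) (hσ : 0 < σ) (hα1 : 0 ≤ α1) (hα2 : 0 ≤ α2)
    (hQ0 : γ / (μ1 * (γ + μ2)) < 1)
    (J : Matrix (Fin 5) (Fin 5) ℝ)
    (hJ : J = !![-μ1, 0, γ / k, 0, 0;
                 0, -μ1, 0, 0, 0;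
                 k, k, -(μ2 + γ), 0, 0;
                 0, -β2, 0, -μH, 0;
                 0, β2, 0, 0, -(σ + μH)]) :
    ∀ lam : ℂ, lam ∈ spectrum ℂ (J.map (Complex.ofReal)) → lam.re < 0 :=
  E0_linearly_stable_general γ k μ1 μ2 μH β2 σ hγ hk hμ1 hμ2 hμH hσ hQ0 J hJ
end

section
/- If Q₀ > 1, where Q₀ = γ/(μ₁(γ+μ₂)), then the equilibrium E₀ = (0,0,0,1,0) is unstable: the Jacobian of the system at E₀ has at least one eigenvalue with positive real part. -/
/-!
The plane spanned by the first and third coordinate vectors is invariant under the Jacobian at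
`E₀`, which acts on it by the block `[[-μ₁, γ/k], [k, -(μ₂+γ)]]` with characteristic equation
`(λ + μ₁)(λ + μ₂ + γ) = γ`.
When `Q₀ > 1` we have `μ₁(μ₂+γ) < γ`, so this quadratic has a negative constant term and hence a
positive root `λ`, with eigenvector `(γ, 0, k(λ + μ₁), 0, 0)` of the full Jacobian.
-/

open Matrix

theorem exists_pos_add_mul_add_eq {a b c : ℝ} (h : a * b < c) :
    ∃ x, 0 < x ∧ (x + a) * (x + b) = c := by
  set s := Real.sqrt ((a - b) ^ 2 + 4 * c)
  have hs : s ^ 2 = (a - b) ^ 2 + 4 * c := Real.sq_sqrt (by nlinarith [sq_nonneg (a + b)])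
  have hs_gt : a + b < s := Real.lt_sqrt_of_sq_lt (by nlinarith)
  refine ⟨(s - (a + b)) / 2, by linarith, ?_⟩
  linear_combination hs / 4

namespace Matrix

variable {n : Type*} [Fintype n] [DecidableEq n]

theorem mem_spectrum_of_mulVec_eq_smul {R : Type*} [CommRing R] {A : Matrix n n R} {μ : R}
    {v : n → R} (hv : v ≠ 0) (h : A *ᵥ v = μ • v) : μ ∈ spectrum R A := by
  rw [← spectrum_toLin']
  exact (Module.End.hasEigenvalue_of_hasEigenvector
    ⟨Module.End.mem_eigenspace_iff.mpr h, hv⟩).mem_spectrum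

theorem map_mem_spectrum_map {K L : Type*} [Field K] [CommRing L] [Nontrivial L] (f : K →+* L)
    {A : Matrix n n K} {μ : K} (h : μ ∈ spectrum K A) : f μ ∈ spectrum L (A.map f) := by
  rw [mem_spectrum_iff_isRoot_charpoly] at h
  apply mem_spectrum_of_isRoot_charpoly
  rw [charpoly_map]
  exact h.map

end Matrix

section Jacobian

variable {K : Type*} [Field K]

def jacobianE0 (γ k μ1 μ2 μH β2 σ : K) : Matrix (Fin 5) (Fin 5) K :=
  !![-μ1, 0, γ / k, 0, 0;
     0, -μ1, 0, 0, 0;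
     k, k, -(μ2 + γ), 0, 0;
     0, -β2, 0, -μH, 0;
     0, β2, 0, 0, -(σ + μH)]

variable {γ k μ1 μ2 μH β2 σ x : K}

theorem jacobianE0_mulVec (hk : k ≠ 0) (hx : (x + μ1) * (x + (γ + μ2)) = γ) :
    jacobianE0 γ k μ1 μ2 μH β2 σ *ᵥ ![γ, 0, k * (x + μ1), 0, 0] =
      x • ![γ, 0, k * (x + μ1), 0, 0] := by
  ext i
  fin_cases i <;>
    simp only [jacobianE0, mulVec, dotProduct, Fin.sum_univ_five, of_apply, cons_val',
      cons_val_fin_one, cons_val, cons_val_zero, cons_val_one, Fin.zero_eta, Fin.mk_one,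
      Fin.reduceFinMk, Fin.isValue, Nat.succ_eq_add_one, Nat.reduceAdd, Pi.smul_apply, smul_eq_mul,
      mul_zero, zero_mul, add_zero]
  · field_simp
    ring
  · linear_combination (-k) * hx

theorem mem_spectrum_jacobianE0 (hγ : γ ≠ 0) (hk : k ≠ 0)
    (hx : (x + μ1) * (x + (γ + μ2)) = γ) : x ∈ spectrum K (jacobianE0 γ k μ1 μ2 μH β2 σ) :=
  mem_spectrum_of_mulVec_eq_smul (fun h => hγ (congrFun h 0)) (jacobianE0_mulVec hk hx)

end Jacobian

theorem E0_unstable_general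
    (γ k μ1 μ2 μH β2 σ : ℝ)
    (hγ : 0 < γ) (hk : 0 < k)
    (hQ0 : 1 < γ / (μ1 * (γ + μ2)))
    (J : Matrix (Fin 5) (Fin 5) ℝ)
    (hJ : J = !![-μ1, 0, γ / k, 0, 0;
                 0, -μ1, 0, 0, 0;
                 k, k, -(μ2 + γ), 0, 0;
                 0, -β2, 0, -μH, 0;
                 0, β2, 0, 0, -(σ + μH)]) :
    ∃ lam : ℂ, lam ∈ spectrum ℂ (J.map (Complex.ofReal)) ∧ 0 < lam.re := by
  have hden : 0 < μ1 * (γ + μ2) := (div_pos_iff_of_pos_left hγ).mp (one_pos.trans hQ0)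
  obtain ⟨x, hx_pos, hx⟩ := exists_pos_add_mul_add_eq ((one_lt_div hden).mp hQ0)
  subst hJ
  exact ⟨x, map_mem_spectrum_map Complex.ofRealHom (mem_spectrum_jacobianE0 hγ.ne' hk.ne' hx),
    by simpa using hx_pos⟩

/-- If Q₀ > 1 then the Jacobian at E₀ has an eigenvalue with positive real part. -/
theorem E0_unstable
    (γ k μ1 μ2 μH β1 β2 σ α1 α2 : ℝ)
    (hγ : 0 < γ) (hk : 0 < k) (hμ1 : 0 < μ1) (hμ2 : 0 < μ2) (hμH : 0 < μH)
    (hβ1 : 0 < β1) (hβ2 : 0 < β2) (hσ : 0 < σ) (hα1 : 0 ≤ α1) (hα2 : 0 ≤ α2)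
    (hQ0 : 1 < γ / (μ1 * (γ + μ2)))
    (J : Matrix (Fin 5) (Fin 5) ℝ)
    (hJ : J = !![-μ1, 0, γ / k, 0, 0;
                 0, -μ1, 0, 0, 0;
                 k, k, -(μ2 + γ), 0, 0;
                 0, -β2, 0, -μH, 0;
                 0, β2, 0, 0, -(σ + μH)]) :
    ∃ lam : ℂ, lam ∈ spectrum ℂ (J.map (Complex.ofReal)) ∧ 0 < lam.re :=
  E0_unstable_general γ k μ1 μ2 μH β2 σ hγ hk hQ0 J hJ
end

section
/- Suppose (M_S*, M_I*, A*, H*, I*) is an equilibrium of the system with all components positive. Then M_S* + M_I* = γA*/(kμ₁ + γA*) and A* = k(M_S*+M_I*)/(μ₂ + γ + k(M_S*+M_I*)), and consequently A* = a* = k(1 - Q₀⁻¹)/(k + μ₂ + γ), where Q₀ = γ/(μ₁(γ+μ₂)). -/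
/-!
Adding the first two equilibrium equations cancels the infection terms, so the total mosquito
density `S = M_S + M_I` and the aquatic density `A` satisfy two balance laws of the same shape
`a (1 - x) = b x`, each solved by `x = a / (a + b)`. Eliminating `S` between them leaves
`A` times a linear polynomial in `A`; since `A ≠ 0` the linear factor vanishes, which gives `a*`.
-/

lemma eq_div_add_of_mul_one_sub_eq {a b x : ℝ} (h : a * (1 - x) = b * x) (hab : a + b ≠ 0) :
    x = a / (a + b) := by
  rw [eq_div_iff hab]
  linear_combination -h

lemma total_balance_of_equilibrium {γ k μ1 φ A MS MI : ℝ} (hk : k ≠ 0)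
    (e1 : γ / k * A * (1 - MS - MI) - μ1 * MS - φ * MS = 0) (e2 : φ * MS - μ1 * MI = 0) :
    γ * A * (1 - (MS + MI)) = k * μ1 * (MS + MI) := by
  field_simp at e1
  linear_combination e1 + k * e2

lemma aquatic_eq_of_balances {γ k μ1 μ2 A S : ℝ} (hγ : γ ≠ 0) (hden : k + μ2 + γ ≠ 0)
    (hS : γ * A * (1 - S) = k * μ1 * S) (hA : k * S * (1 - A) = (μ2 + γ) * A) (hA0 : A ≠ 0) :
    A = k * (1 - μ1 * (γ + μ2) / γ) / (k + μ2 + γ) := by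
  have hlin : γ * (k + μ2 + γ) * A = k * (γ - μ1 * (γ + μ2)) := by
    refine mul_left_cancel₀ hA0 ?_
    linear_combination -(k * (1 - A) * hS) - (k * μ1 + γ * A) * hA
  rw [eq_div_iff hden]
  field_simp
  linear_combination hlin

theorem endemic_mosquito_relations_general
    (γ k μ1 μ2 β1 α1 : ℝ)
    (hγ : 0 < γ) (hk : 0 < k) (hμ1 : 0 < μ1) (hμ2 : 0 < μ2)
    (Q0 : ℝ) (hQ0 : Q0 = γ / (μ1 * (γ + μ2)))
    (MS MI A I : ℝ)
    (hMSpos : 0 < MS) (hMIpos : 0 < MI) (hApos : 0 < A)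
    (e1 : γ / k * A * (1 - MS - MI) - μ1 * MS - β1 * (I / (1 + α1 * I)) * MS = 0)
    (e2 : β1 * (I / (1 + α1 * I)) * MS - μ1 * MI = 0)
    (e3 : k * (1 - A) * (MS + MI) - μ2 * A - γ * A = 0) :
    MS + MI = γ * A / (k * μ1 + γ * A) ∧
    A = k * (MS + MI) / (μ2 + γ + k * (MS + MI)) ∧
    A = k * (1 - Q0⁻¹) / (k + μ2 + γ) := by
  have hS : γ * A * (1 - (MS + MI)) = k * μ1 * (MS + MI) :=
    total_balance_of_equilibrium hk.ne' e1 e2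
  have hA : k * (MS + MI) * (1 - A) = (μ2 + γ) * A := by linear_combination e3
  refine ⟨?_, ?_, ?_⟩
  · rw [add_comm (k * μ1)]
    exact eq_div_add_of_mul_one_sub_eq hS (by positivity)
  · rw [add_comm (μ2 + γ)]
    exact eq_div_add_of_mul_one_sub_eq hA (by positivity)
  · rw [hQ0, inv_div]
    exact aquatic_eq_of_balances hγ.ne' (by positivity) hS hA hApos.ne'

/-- At a positive (endemic) equilibrium the mosquito components satisfy the
stated relations, and in particular A* = a*. -/
theorem endemic_mosquito_relations
    (γ k μ1 μ2 μH β1 β2 σ α1 α2 : ℝ)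
    (hγ : 0 < γ) (hk : 0 < k) (hμ1 : 0 < μ1) (hμ2 : 0 < μ2) (hμH : 0 < μH)
    (hβ1 : 0 < β1) (hβ2 : 0 < β2) (hσ : 0 < σ) (hα1 : 0 ≤ α1) (hα2 : 0 ≤ α2)
    (Q0 : ℝ) (hQ0 : Q0 = γ / (μ1 * (γ + μ2))) (hQ0gt : 1 < Q0)
    (MS MI A H I : ℝ)
    (hMSpos : 0 < MS) (hMIpos : 0 < MI) (hApos : 0 < A)
    (hHpos : 0 < H) (hIpos : 0 < I)
    (e1 : γ / k * A * (1 - MS - MI) - μ1 * MS - β1 * (I / (1 + α1 * I)) * MS = 0)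
    (e2 : β1 * (I / (1 + α1 * I)) * MS - μ1 * MI = 0)
    (e3 : k * (1 - A) * (MS + MI) - μ2 * A - γ * A = 0)
    (e4 : μH - μH * H - β2 * (MI / (1 + α2 * MI)) * H = 0)
    (e5 : β2 * (MI / (1 + α2 * MI)) * H - (σ + μH) * I = 0) :
    MS + MI = γ * A / (k * μ1 + γ * A) ∧
    A = k * (MS + MI) / (μ2 + γ + k * (MS + MI)) ∧
    A = k * (1 - Q0⁻¹) / (k + μ2 + γ) :=
  endemic_mosquito_relations_general γ k μ1 μ2 β1 α1 hγ hk hμ1 hμ2 Q0 hQ0 MS MI A I hMSpos hMIpos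
    hApos e1 e2 e3
end

section
/- The normalized sensitivity index of R₀ with respect to σ equals S_σ = -σ/(2(σ+μ_H)), and with respect to k equals S_k = -kμ₁/(2(γ+kμ₁)); in particular both lie strictly between -1/2 and 0. -/
/-!
The sensitivity index is the logarithmic derivative `d log R₀ / d log Ψ`, so the square root
halves it, `c / g` negates it, and factors not involving `Ψ` contribute nothing. Hence `S_σ` is
minus half the index `σ / (σ + μ_H)` of `σ + μ_H`, and `S_k` minus half the index
`k μ₁ / (γ + k μ₁)` of `γ + k μ₁`; both indices lie in `(0, 1)`.
-/

noncomputable def sensitivityIndex (f : ℝ → ℝ) (x : ℝ) : ℝ :=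
  x / f x * deriv f x

theorem HasDerivAt.sensitivityIndex_eq {f : ℝ → ℝ} {f' x : ℝ} (hf : HasDerivAt f f' x) :
    sensitivityIndex f x = x / f x * f' := by
  rw [sensitivityIndex, hf.deriv]

theorem sensitivityIndex_sqrt {f : ℝ → ℝ} {f' x : ℝ} (hf : HasDerivAt f f' x) (hfx : 0 < f x) :
    sensitivityIndex (fun y => √(f y)) x = sensitivityIndex f x / 2 := by
  have : 0 < √(f x) := Real.sqrt_pos.mpr hfx
  rw [(hf.sqrt hfx.ne').sensitivityIndex_eq, hf.sensitivityIndex_eq]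
  field_simp
  rw [Real.sq_sqrt hfx.le]
  ring

theorem sensitivityIndex_const_div {g : ℝ → ℝ} {c g' x : ℝ} (hc : c ≠ 0)
    (hg : HasDerivAt g g' x) (hgx : g x ≠ 0) :
    sensitivityIndex (fun y => c / g y) x = -sensitivityIndex g x := by
  rw [((hasDerivAt_const x c).fun_div hg hgx).sensitivityIndex_eq, hg.sensitivityIndex_eq]
  field_simp
  ring

theorem sensitivityIndex_sqrt_const_div {g : ℝ → ℝ} {c g' x : ℝ} (hc : 0 < c)
    (hg : HasDerivAt g g' x) (hgx : 0 < g x) :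
    sensitivityIndex (fun y => √(c / g y)) x = -(x * g') / (2 * g x) := by
  rw [sensitivityIndex_sqrt ((hasDerivAt_const x c).fun_div hg hgx.ne') (div_pos hc hgx),
    sensitivityIndex_const_div hc.ne' hg hgx.ne', hg.sensitivityIndex_eq]
  ring

theorem neg_div_two_mul_add_mem_Ioo {a b : ℝ} (ha : 0 < a) (hb : 0 < b) :
    -a / (2 * (a + b)) ∈ Set.Ioo (-(1 / 2)) 0 := by
  constructor
  · rw [neg_div, neg_lt_neg_iff, div_lt_div_iff₀ (by positivity) two_pos]
    linarith
  · exact div_neg_of_neg_of_pos (neg_neg_of_pos ha) (by positivity)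

theorem sensitivity_sigma_k_general
    (β1 β2 γ k μ1 σ μH : ℝ)
    (hβ1 : 0 < β1) (hβ2 : 0 < β2) (hγ : 0 < γ) (hk : 0 < k)
    (hμ1 : 0 < μ1) (hσ : 0 < σ) (hμH : 0 < μH)
    (Q0 : ℝ) (hQ0gt : 1 < Q0)
    (R0σ R0k : ℝ → ℝ)
    (hR0σ : ∀ s, R0σ s = Real.sqrt (β1 * β2 * γ * (1 - Q0⁻¹)
        / (μ1 * (s + μH) * (γ + k * μ1))))
    (hR0k : ∀ kk, R0k kk = Real.sqrt (β1 * β2 * γ * (1 - Q0⁻¹)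
        / (μ1 * (σ + μH) * (γ + kk * μ1))))
    (Sσ Sk : ℝ)
    (hSσ : Sσ = σ / R0σ σ * deriv R0σ σ)
    (hSk : Sk = k / R0k k * deriv R0k k) :
    Sσ = -σ / (2 * (σ + μH)) ∧ Sk = -(k * μ1) / (2 * (γ + k * μ1)) ∧
    -(1 / 2) < Sσ ∧ Sσ < 0 ∧ -(1 / 2) < Sk ∧ Sk < 0 := by
  have hc : 0 < β1 * β2 * γ * (1 - Q0⁻¹) := by
    have : Q0⁻¹ < 1 := inv_lt_one_of_one_lt₀ hQ0gt
    have : 0 < 1 - Q0⁻¹ := by linarith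
    positivity
  have hSσ_eq : Sσ = -σ / (2 * (σ + μH)) := by
    have hg : HasDerivAt (fun s => μ1 * (s + μH) * (γ + k * μ1)) (μ1 * (γ + k * μ1)) σ := by
      simpa using (((hasDerivAt_id σ).add_const μH).const_mul μ1).mul_const (γ + k * μ1)
    rw [hSσ, funext hR0σ]
    refine (sensitivityIndex_sqrt_const_div hc hg (by positivity)).trans ?_
    field_simp
  have hSk_eq : Sk = -(k * μ1) / (2 * (γ + k * μ1)) := by
    have hg : HasDerivAt (fun kk => μ1 * (σ + μH) * (γ + kk * μ1)) (μ1 * (σ + μH) * μ1) k := by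
      simpa using (((hasDerivAt_id k).mul_const μ1).const_add γ).const_mul (μ1 * (σ + μH))
    rw [hSk, funext hR0k]
    refine (sensitivityIndex_sqrt_const_div hc hg (by positivity)).trans ?_
    field_simp
  obtain ⟨hSσ_lo, hSσ_hi⟩ := hSσ_eq ▸ neg_div_two_mul_add_mem_Ioo hσ hμH
  obtain ⟨hSk_lo, hSk_hi⟩ := hSk_eq ▸ add_comm (k * μ1) γ ▸
    neg_div_two_mul_add_mem_Ioo (mul_pos hk hμ1) hγ
  exact ⟨hSσ_eq, hSk_eq, hSσ_lo, hSσ_hi, hSk_lo, hSk_hi⟩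

/-- Sensitivity indices of R₀ with respect to σ and k, with bounds. -/
theorem sensitivity_sigma_k
    (β1 β2 γ k μ1 μ2 σ μH : ℝ)
    (hβ1 : 0 < β1) (hβ2 : 0 < β2) (hγ : 0 < γ) (hk : 0 < k)
    (hμ1 : 0 < μ1) (hμ2 : 0 < μ2) (hσ : 0 < σ) (hμH : 0 < μH)
    (Q0 : ℝ) (hQ0 : Q0 = γ / (μ1 * (γ + μ2))) (hQ0gt : 1 < Q0)
    (R0σ R0k : ℝ → ℝ)
    (hR0σ : ∀ s, R0σ s = Real.sqrt (β1 * β2 * γ * (1 - Q0⁻¹)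
        / (μ1 * (s + μH) * (γ + k * μ1))))
    (hR0k : ∀ kk, R0k kk = Real.sqrt (β1 * β2 * γ * (1 - Q0⁻¹)
        / (μ1 * (σ + μH) * (γ + kk * μ1))))
    (Sσ Sk : ℝ)
    (hSσ : Sσ = σ / R0σ σ * deriv R0σ σ)
    (hSk : Sk = k / R0k k * deriv R0k k) :
    Sσ = -σ / (2 * (σ + μH)) ∧ Sk = -(k * μ1) / (2 * (γ + k * μ1)) ∧
    -(1 / 2) < Sσ ∧ Sσ < 0 ∧ -(1 / 2) < Sk ∧ Sk < 0 :=
  sensitivity_sigma_k_general β1 β2 γ k μ1 σ μH hβ1 hβ2 hγ hk hμ1 hσ hμH Q0 hQ0gt R0σ R0k hR0σ hR0k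
    Sσ Sk hSσ hSk
end

section
/- For g₁(I) = I/(1+α₁I) and g₂(M) = M/(1+α₂M) with α₁, α₂ > 0, one has g₁'(0) = 1, g₂'(0) = 1, g₁''(0) = -2α₁, and g₂''(0) = -2α₂; consequently the bifurcation coefficient a = 2v₂w₁w₅β₁*g₁'(0) + v₂w₅²β₁*m*g₁''(0) + 2v₅w₂w₄β₂g₂'(0) + v₅w₂²β₂g₂''(0) is negative and b = v₂w₅m*g₁'(0) is positive, where v₂ = β₂/(α₂(σ+μ_H+μ₁)), v₅ = μ₁/(σ+μ_H+μ₁), w₁ = -α₂(σ+μ_H)/β₂, w₂ = α₂(σ+μ_H)/β₂, w₄ = -(σ+μ_H)/μ_H, w₅ = 1. -/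
open Topology

lemma hasDerivAt_div_one_add_mul (α x : ℝ) (hx : 1 + α * x ≠ 0) :
    HasDerivAt (fun y => y / (1 + α * y)) ((1 + α * x) ^ 2)⁻¹ x := by
  have hden : HasDerivAt (fun y : ℝ => 1 + α * y) α x := by
    simpa using ((hasDerivAt_id x).const_mul α).const_add 1
  refine ((hasDerivAt_id' x).fun_div hden hx).congr_deriv ?_
  field_simp
  ring

lemma deriv_div_one_add_mul_eventuallyEq (α : ℝ) :
    deriv (fun y => y / (1 + α * y)) =ᶠ[𝓝 0] fun x => ((1 + α * x) ^ 2)⁻¹ := by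
  have hopen : IsOpen {x : ℝ | 1 + α * x ≠ 0} :=
    isOpen_ne.preimage (by fun_prop)
  filter_upwards [hopen.mem_nhds (by simp)] with x hx
  exact (hasDerivAt_div_one_add_mul α x hx).deriv

lemma deriv_div_one_add_mul_zero (α : ℝ) :
    deriv (fun y : ℝ => y / (1 + α * y)) 0 = 1 := by
  simpa using (hasDerivAt_div_one_add_mul α 0 (by simp)).deriv

lemma deriv_deriv_div_one_add_mul_zero (α : ℝ) :
    deriv (deriv fun y : ℝ => y / (1 + α * y)) 0 = -2 * α := by
  rw [(deriv_div_one_add_mul_eventuallyEq α).deriv_eq]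
  have hsq : HasDerivAt (fun x : ℝ => (1 + α * x) ^ 2) (2 * α) 0 := by
    simpa using (((hasDerivAt_id (0 : ℝ)).const_mul α).const_add 1).fun_pow 2
  refine ((hsq.fun_inv (by norm_num)).congr_deriv ?_).deriv
  norm_num

lemma bifurcation_coefficient_neg {v2 v5 w1 w2 w4 β1 β2 m α1 α2 : ℝ}
    (hv2 : 0 < v2) (hv5 : 0 < v5) (hw1 : w1 < 0) (hw2 : 0 < w2) (hw4 : w4 < 0)
    (hβ1 : 0 < β1) (hβ2 : 0 < β2) (hm : 0 < m) (hα1 : 0 < α1) (hα2 : 0 < α2) :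
    2 * v2 * w1 * β1 + v2 * β1 * m * (-2 * α1) + 2 * v5 * w2 * w4 * β2
      + v5 * w2 ^ 2 * β2 * (-2 * α2) < 0 := by
  have hw1_term : 0 < v2 * β1 * -w1 := by have := neg_pos.2 hw1; positivity
  have hα1_term : 0 < v2 * β1 * m * α1 := by positivity
  have hw4_term : 0 < v5 * w2 * β2 * -w4 := by have := neg_pos.2 hw4; positivity
  have hα2_term : 0 < v5 * w2 ^ 2 * β2 * α2 := by positivity
  linarith

/-- Derivatives of the Holling II forces of infection at 0, and signs of the
bifurcation coefficients a and b. -/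
theorem bifurcation_coefficients
    (β1star β2 μ1 μH σ α1 α2 mstar : ℝ)
    (hβ1star : 0 < β1star) (hβ2 : 0 < β2) (hμ1 : 0 < μ1) (hμH : 0 < μH)
    (hσ : 0 < σ) (hα1 : 0 < α1) (hα2 : 0 < α2) (hm : 0 < mstar)
    (g1 g2 : ℝ → ℝ)
    (hg1 : ∀ x, g1 x = x / (1 + α1 * x))
    (hg2 : ∀ x, g2 x = x / (1 + α2 * x))
    (v2 v5 w1 w2 w4 w5 a b : ℝ)
    (hv2 : v2 = β2 / (α2 * (σ + μH + μ1)))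
    (hv5 : v5 = μ1 / (σ + μH + μ1))
    (hw1 : w1 = -(α2 * (σ + μH)) / β2)
    (hw2 : w2 = α2 * (σ + μH) / β2)
    (hw4 : w4 = -(σ + μH) / μH)
    (hw5 : w5 = 1)
    (ha : a = 2 * v2 * w1 * w5 * β1star * deriv g1 0
        + v2 * w5 ^ 2 * β1star * mstar * deriv (deriv g1) 0
        + 2 * v5 * w2 * w4 * β2 * deriv g2 0
        + v5 * w2 ^ 2 * β2 * deriv (deriv g2) 0)
    (hb : b = v2 * w5 * mstar * deriv g1 0) :
    deriv g1 0 = 1 ∧ deriv g2 0 = 1 ∧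
    deriv (deriv g1) 0 = -2 * α1 ∧ deriv (deriv g2) 0 = -2 * α2 ∧
    a < 0 ∧ 0 < b := by
  obtain rfl : g1 = fun x => x / (1 + α1 * x) := funext hg1
  obtain rfl : g2 = fun x => x / (1 + α2 * x) := funext hg2
  have hv2_pos : 0 < v2 := by rw [hv2]; positivity
  have hv5_pos : 0 < v5 := by rw [hv5]; positivity
  have hw1_neg : w1 < 0 := by
    rw [hw1, neg_div, neg_lt_zero]; positivity
  have hw2_pos : 0 < w2 := by rw [hw2]; positivity
  have hw4_neg : w4 < 0 := by
    rw [hw4, neg_div, neg_lt_zero]; positivity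
  simp only [deriv_div_one_add_mul_zero, deriv_deriv_div_one_add_mul_zero, hw5] at ha hb
  refine ⟨deriv_div_one_add_mul_zero α1, deriv_div_one_add_mul_zero α2,
    deriv_deriv_div_one_add_mul_zero α1, deriv_deriv_div_one_add_mul_zero α2, ?_, ?_⟩
  · have := bifurcation_coefficient_neg hv2_pos hv5_pos hw1_neg hw2_pos hw4_neg hβ1star hβ2 hm
      hα1 hα2
    rw [ha]
    linarith
  · rw [hb, mul_one, mul_one]
    exact mul_pos hv2_pos hm
end
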